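/- With the setup of the angle identity (p ≠ q, e = (q−p)/‖q−p‖, unit vectors l_p, l_q, c_pq¹ = 2(l_p·e)e − l_p, c_qp¹ = 2(l_q·(−e))(−e) − l_q) and any ε ∈ [0, π]: the arc c_pq is ε-confluent (i.e., angle(c_pq¹, l_q) ≤ ε) if and only if the reverse arc c_qp is ε-confluent (i.e., angle(c_qp¹, l_p) ≤ ε). -/
import Mathlib


open RealInnerProductSpace

noncomputable abbrev E3 := EuclideanSpace ℝ (Fin 3)

theorem stmt3 (p q e lp lq cpq1 cqp1 : E3) (hpq : p ≠ q)
    (he : e = ‖q - p‖⁻¹ • (q - p))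
    (hlp : ‖lp‖ = 1) (hlq : ‖lq‖ = 1)
    (hcpq : cpq1 = (2 * ⟪lp, e⟫) • e - lp)
    (hcqp : cqp1 = (2 * ⟪lq, -e⟫) • (-e) - lq)
    (ε : ℝ) (hε0 : 0 ≤ ε) (hεπ : ε ≤ Real.pi) :
    InnerProductGeometry.angle cpq1 lq ≤ ε ↔
      InnerProductGeometry.angle cqp1 lp ≤ ε := by
  have hqp : q - p ≠ 0 := sub_ne_zero.mpr (Ne.symm hpq)
  have hne : ‖e‖ = 1 := by
    rw [he, norm_smul, norm_inv, norm_norm, inv_mul_cancel₀ (norm_ne_zero_iff.mpr hqp)]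
  have hee : ⟪e, e⟫ = 1 := by
    rw [real_inner_self_eq_norm_sq, hne]; ring
  have key : ∀ (u v : E3), ‖u‖ = 1 → ‖v‖ = 1 →
      ‖(2 * ⟪u, e⟫) • e - u‖ = 1 ∧
      ⟪(2 * ⟪u, e⟫) • e - u, v⟫ = 2 * ⟪u, e⟫ * ⟪e, v⟫ - ⟪u, v⟫ := by
    intro u v hu hv
    constructor
    · have : ‖(2 * ⟪u, e⟫) • e - u‖ ^ 2 = 1 := by
        rw [← real_inner_self_eq_norm_sq]
        simp only [inner_sub_left, inner_sub_right, real_inner_smul_left,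
          real_inner_smul_right, hee, real_inner_comm e u]
        rw [real_inner_self_eq_norm_sq, hu]; ring
      nlinarith [norm_nonneg ((2 * ⟪u, e⟫) • e - u)]
    · rw [inner_sub_left, real_inner_smul_left]
  have h1 := key lp lq hlp hlq
  have h2 := key lq lp hlq hlp
  have hcqp' : cqp1 = (2 * ⟪lq, e⟫) • e - lq := by
    rw [hcqp, inner_neg_right]
    module
  have hangle : InnerProductGeometry.angle cpq1 lq = InnerProductGeometry.angle cqp1 lp := by
    unfold InnerProductGeometry.angle
    rw [hcpq, hcqp', h1.1, h2.1, h1.2, h2.2, hlp, hlq,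
      real_inner_comm lp e, real_inner_comm e lq, real_inner_comm lp lq]
    ring_nf
  rw [hangle]
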